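/- arXiv:2402.15417 — 5 statements merged into one kernel-verified Lean document; each statement's English description precedes it below -/
import Mathlib

section
/- For any rack X, the kernel of the canonical epimorphism ψ : As(X) → Inn(X) is contained in the center of As(X); indeed, g⁻¹ e_x g = e_{x·ψ(g)} holds in As(X) for every x ∈ X and every g ∈ As(X). -/
/-!  Core framework: racks/quandles with right operation, inner automorphism group
(with opposite composition, acting on the right), associated group. -/

universe u v

noncomputable section

/-- A rack: a set with a right-distributive binary operation whose right
translations are bijective. -/
structure RackStr (X : Type u) where
  op : X → X → X
  bij : ∀ y, Function.Bijective fun x => op x y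
  distrib : ∀ x y z, op (op x y) z = op (op x z) (op y z)

/-- A quandle: a rack which is idempotent. -/
structure QuandleStr (X : Type u) extends RackStr X where
  idem : ∀ x, op x x = x

namespace RackStr

variable {X : Type u} (R : RackStr X)

/-- The right translation `s_y : x ↦ x * y`, as a permutation. -/
def s (y : X) : Equiv.Perm X := Equiv.ofBijective _ (R.bij y)

@[simp] lemma s_apply (y x : X) : R.s y x = R.op x y := rfl

/-- The right translation, as an element of the opposite of the permutation group
(the inner automorphism group is equipped with the *opposite* composition,
so that it acts on `X` on the right). -/
def sop (y : X) : (Equiv.Perm X)ᵐᵒᵖ := MulOpposite.op (R.s y)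

/-- The inner automorphism group `Inn(X)`: the subgroup (of the permutation
group with opposite multiplication) generated by the right translations. -/
def Inn : Subgroup (Equiv.Perm X)ᵐᵒᵖ := Subgroup.closure (Set.range R.sop)

/-- The relations defining the associated group `As(X)`. -/
def rels : Set (FreeGroup X) :=
  { r | ∃ x y, r = FreeGroup.of x * FreeGroup.of y *
      (FreeGroup.of y * FreeGroup.of (R.op x y))⁻¹ }

/-- The associated group `As(X) = ⟨e_x (x ∈ X) ∣ e_x e_y = e_y e_{x*y}⟩`. -/
def As : Type u := PresentedGroup R.rels

instance : Group R.As := by unfold As; infer_instance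

/-- The generator `e_x` of the associated group. -/
def e (x : X) : R.As := PresentedGroup.of x

lemma sop_rel (x y : X) : R.sop x * R.sop y = R.sop y * R.sop (R.op x y) := by
  unfold sop
  rw [← MulOpposite.op_mul, ← MulOpposite.op_mul]
  congr 1
  ext a
  simp only [Equiv.Perm.mul_apply, s_apply]
  exact R.distrib a x y

/-- The canonical homomorphism `ψ` from the associated group, sending `e_x` to
`s_x`; its image is the inner automorphism group `Inn(X)`. -/
def psi : R.As →* (Equiv.Perm X)ᵐᵒᵖ :=
  PresentedGroup.toGroup (f := R.sop) (by
    rintro r ⟨x, y, rfl⟩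
    rw [map_mul, map_mul, map_inv, map_mul]
    simp only [FreeGroup.lift_apply_of]
    rw [mul_inv_eq_one]
    exact R.sop_rel x y)

@[simp] lemma psi_e (x : X) : R.psi (R.e x) = R.sop x :=
  PresentedGroup.toGroup.of _

/-- The right action of the associated group on `X` (through `ψ`). -/
def act (x : X) (g : R.As) : X := (R.psi g).unop x

@[simp] lemma act_one (x : X) : R.act x 1 = x := by simp [act]

lemma act_mul (x : X) (g h : R.As) : R.act x (g * h) = R.act (R.act x g) h := by
  simp [act, map_mul]

@[simp] lemma act_e (x y : X) : R.act x (R.e y) = R.op x y := by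
  simp [act, sop]

/-- The orbit equivalence relation of the action of the inner automorphism group
(equivalently, of the associated group) on `X`. -/
def orbSetoid : Setoid X where
  r a b := ∃ g : R.As, R.act a g = b
  iseqv := by
    constructor
    · exact fun a => ⟨1, by simp⟩
    · rintro a b ⟨g, rfl⟩
      exact ⟨g⁻¹, by rw [← R.act_mul, mul_inv_cancel, act_one]⟩
    · rintro a b c ⟨g, rfl⟩ ⟨h, rfl⟩
      exact ⟨g * h, R.act_mul a g h⟩

/-- The set of orbits (connected components) `O_X`. -/
def Orbits : Type u := Quotient R.orbSetoid

/-- The orbit of a point. -/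
def orb (x : X) : R.Orbits := Quotient.mk R.orbSetoid x

lemma orb_op (x y : X) : R.orb (R.op x y) = R.orb x :=
  (Quot.sound ⟨R.e y, by simp⟩).symm

/-- The abelianization homomorphism `α : As(X) → ℤ^{⊕ O_X}`, sending `e_x` to the
basis element indexed by the orbit of `x`. -/
def alpha : R.As →* Multiplicative (R.Orbits →₀ ℤ) :=
  PresentedGroup.toGroup
    (f := fun x => Multiplicative.ofAdd (Finsupp.single (R.orb x) 1)) (by
    rintro r ⟨x, y, rfl⟩
    rw [map_mul, map_mul, map_inv, map_mul]
    simp only [FreeGroup.lift_apply_of]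
    rw [mul_inv_eq_one, R.orb_op x y, mul_comm])

@[simp] lemma alpha_e (x : X) :
    R.alpha (R.e x) = Multiplicative.ofAdd (Finsupp.single (R.orb x) 1) :=
  PresentedGroup.toGroup.of _

/-- `α × ψ`. -/
def alphaPsi : R.As →* Multiplicative (R.Orbits →₀ ℤ) × (Equiv.Perm X)ᵐᵒᵖ :=
  R.alpha.prod R.psi

/-- `Inn̄(X)`, the image of `α × ψ`. -/
def InnBar : Subgroup (Multiplicative (R.Orbits →₀ ℤ) × (Equiv.Perm X)ᵐᵒᵖ) :=
  R.alphaPsi.range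

/-- `s̄_x = (α × ψ)(e_x)` as an element of `Inn̄(X)`. -/
def sbar (x : X) : R.InnBar := ⟨R.alphaPsi (R.e x), ⟨R.e x, rfl⟩⟩

/-- The group homomorphism `ε : As(X) → ℤ` sending every generator to `1`. -/
def epsAs : R.As →* Multiplicative ℤ :=
  PresentedGroup.toGroup (f := fun _ => Multiplicative.ofAdd (1 : ℤ)) (by
    rintro r ⟨x, y, rfl⟩
    rw [map_mul, map_mul, map_inv, map_mul]
    simp only [FreeGroup.lift_apply_of]
    rw [mul_inv_eq_one])

@[simp] lemma epsAs_e (x : X) : R.epsAs (R.e x) = Multiplicative.ofAdd (1 : ℤ) :=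
  PresentedGroup.toGroup.of _

/-- `ε × ψ`. -/
def epsPsi : R.As →* Multiplicative ℤ × (Equiv.Perm X)ᵐᵒᵖ :=
  R.epsAs.prod R.psi

/-- The augmentation `ε₀ : ℤ^{⊕ O_X} → ℤ` sending each basis element to `1`. -/
def eps0 : (R.Orbits →₀ ℤ) →+ ℤ :=
  Finsupp.liftAddHom fun _ => AddMonoidHom.id ℤ

/-- `ε̄` on the ambient group `ℤ^{⊕ O_X} × Perm(X)ᵐᵒᵖ`: the composite of the first
projection with `ε₀`.  `Inn̄₀(X)` is `Inn̄(X) ∩ Ker ε̄`. -/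
def epsBar : Multiplicative (R.Orbits →₀ ℤ) × (Equiv.Perm X)ᵐᵒᵖ →* Multiplicative ℤ :=
  (AddMonoidHom.toMultiplicative R.eps0).comp (MonoidHom.fst _ _)

end RackStr

/-- The subgroup of (the opposite of) the permutation group consisting of the
permutations fixing `x`. -/
def fixedSub {X : Type u} (x : X) : Subgroup (Equiv.Perm X)ᵐᵒᵖ where
  carrier := { σ | σ.unop x = x }
  one_mem' := rfl
  mul_mem' := by
    intro a b ha hb
    simp only [Set.mem_setOf_eq, MulOpposite.unop_mul, Equiv.Perm.mul_apply] at *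
    rw [ha, hb]
  inv_mem' := by
    intro a ha
    simp only [Set.mem_setOf_eq, MulOpposite.unop_inv] at *
    conv_lhs => rw [← ha]
    exact Equiv.symm_apply_apply _ _

namespace RackStr

variable {X : Type u} (R : RackStr X)

/-- The stabilizer of `x ∈ X` in the associated group. -/
def stabAs (x : X) : Subgroup R.As := Subgroup.comap R.psi (fixedSub x)

lemma mem_stabAs {x : X} {g : R.As} : g ∈ R.stabAs x ↔ R.act x g = x := Iff.rfl

/-- `X` is (algebraically) connected when the inner automorphism group acts
transitively, equivalently when the associated group does. -/
def IsConnected : Prop := ∀ x y : X, ∃ g : R.As, R.act x g = y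

/-- `Inn₀(X) = ψ(Ker ε)`, the image under `ψ` of the kernel of `ε`
(equivalently, the image of `Inn̄₀(X)` under the second projection). -/
def Inn0 : Subgroup (Equiv.Perm X)ᵐᵒᵖ := Subgroup.map R.psi R.epsAs.ker

end RackStr


/-!
The defining relation `e_x e_y = e_y e_{x*y}` says `e_x g = g e_{x·g}` for a generator `g = e_y`,
and this commutation rule propagates from the generators to all of `As(X)` because `x ↦ x·g` is a
right action. Hence `g⁻¹ e_x g = e_{x·g}`; if `ψ(g) = 1` then `g` commutes with every generator
and is therefore central.
-/

namespace RackStr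

variable {X : Type u} (R : RackStr X)

lemma e_mul_e (x y : X) : R.e x * R.e y = R.e y * R.e (R.op x y) :=
  PresentedGroup.mk_eq_mk_of_mul_inv_mem ⟨x, y, rfl⟩

lemma closure_range_e : Subgroup.closure (Set.range R.e) = ⊤ :=
  PresentedGroup.closure_range_of _

lemma e_mul_eq_mul_e_act (x : X) (g : R.As) : R.e x * g = g * R.e (R.act x g) := by
  have hg : g ∈ Subgroup.closure (Set.range R.e) := by simp [closure_range_e]
  induction hg using Subgroup.closure_induction generalizing x with
  | mem g hg =>
    obtain ⟨y, rfl⟩ := hg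
    rw [act_e, e_mul_e]
  | one => simp
  | mul g h _ _ ihg ihh => rw [← mul_assoc, ihg, mul_assoc, ihh, act_mul, mul_assoc]
  | inv g _ ihg =>
    have hx : R.act (R.act x g⁻¹) g = x := by rw [← act_mul, inv_mul_cancel, act_one]
    have hy := ihg (R.act x g⁻¹)
    rw [hx] at hy
    rw [eq_inv_mul_iff_mul_eq, ← mul_assoc, ← hy, mul_inv_cancel_right]

lemma inv_mul_e_mul (x : X) (g : R.As) : g⁻¹ * R.e x * g = R.e (R.act x g) := by
  rw [mul_assoc, e_mul_eq_mul_e_act, inv_mul_cancel_left]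

lemma mem_center_iff_forall_e_mul {g : R.As} :
    g ∈ Subgroup.center R.As ↔ ∀ x, R.e x * g = g * R.e x := by
  rw [← Subgroup.centralizer_univ, ← Subgroup.coe_top, ← closure_range_e,
    Subgroup.centralizer_closure, Subgroup.mem_centralizer_iff, Set.forall_mem_range]

lemma act_eq_self_of_mem_ker {g : R.As} (hg : g ∈ R.psi.ker) (x : X) : R.act x g = x := by
  simp [act, MonoidHom.mem_ker.mp hg]

end RackStr

/-- For any rack `X`, the kernel of the canonical epimorphism
`ψ : As(X) → Inn(X)` is contained in the center of `As(X)`; indeed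
`g⁻¹ e_x g = e_{x·ψ(g)}` for every `x ∈ X` and `g ∈ As(X)`. -/
theorem ker_psi_le_center (X : Type u) (R : RackStr X) :
    R.psi.ker ≤ Subgroup.center R.As ∧
      ∀ (x : X) (g : R.As), g⁻¹ * R.e x * g = R.e (R.act x g) := by
  refine ⟨fun g hg => R.mem_center_iff_forall_e_mul.mpr fun x => ?_, R.inv_mul_e_mul⟩
  rw [R.e_mul_eq_mul_e_act, R.act_eq_self_of_mem_ker hg]
end
end

section
/- For any rack X, the kernel of α×ψ : As(X) → ℤ^{⊕O_X} × Inn(X) is contained in the commutator subgroup of As(X). -/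
/-!  Core framework: racks/quandles with right operation, inner automorphism group
(with opposite composition, acting on the right), associated group. -/

universe u v

noncomputable section

/-! The generator relation forces `[e_x] = [e_{x*y}]` in the abelianization, so `x ↦ [e_x]`
factors through the orbits and `e_{[x]} ↦ [e_x]` is a left inverse of `α` on the abelianization:
`ker α` is contained in the kernel of the abelianization map, the commutator subgroup. -/

namespace RackStr

variable {X : Type u} (R : RackStr X)

lemma apply_act_eq_of_apply_op_eq {β : Type*} (f : X → β) (hf : ∀ x y, f (R.op x y) = f x)
    (x : X) (g : R.As) : f (R.act x g) = f x := by
  have hg : g ∈ Subgroup.closure (Set.range R.e) :=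
    PresentedGroup.closure_range_of R.rels ▸ Subgroup.mem_top g
  induction hg using Subgroup.closure_induction generalizing x with
  | mem _ hy => obtain ⟨y, rfl⟩ := hy; rw [R.act_e, hf]
  | one => rw [R.act_one]
  | mul g h _ _ ihg ihh => rw [R.act_mul, ihh, ihg]
  | inv g _ ihg => rw [← ihg (R.act x g⁻¹), ← R.act_mul, inv_mul_cancel, R.act_one]

lemma abelianization_of_e_op (x y : X) :
    Abelianization.of (R.e (R.op x y)) = Abelianization.of (R.e x) := by
  have h := congrArg Abelianization.of (R.e_mul_e x y)
  rw [map_mul, map_mul, mul_comm (Abelianization.of (R.e y))] at h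
  exact (mul_right_cancel h).symm

def abOfOrbit : R.Orbits → Abelianization R.As :=
  Quotient.lift (fun x => Abelianization.of (R.e x)) (by
    rintro x _ ⟨g, rfl⟩
    exact (R.apply_act_eq_of_apply_op_eq (fun x => Abelianization.of (R.e x))
      R.abelianization_of_e_op x g).symm)

def abOfFinsupp : Multiplicative (R.Orbits →₀ ℤ) →* Abelianization R.As :=
  AddMonoidHom.toMultiplicativeLeft
    (Finsupp.liftAddHom fun o => zmultiplesHom _ (Additive.ofMul (R.abOfOrbit o)))

lemma abOfFinsupp_comp_alpha : R.abOfFinsupp.comp R.alpha = Abelianization.of := by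
  refine PresentedGroup.ext fun x => ?_
  change R.abOfFinsupp (R.alpha (R.e x)) = Abelianization.of (R.e x)
  rw [R.alpha_e]
  change Additive.toMul (Finsupp.liftAddHom
    (fun o => zmultiplesHom _ (Additive.ofMul (R.abOfOrbit o))) (Finsupp.single (R.orb x) 1)) = _
  rw [Finsupp.liftAddHom_apply_single, zmultiplesHom_apply, one_zsmul]
  rfl

lemma ker_alpha_le_commutator : R.alpha.ker ≤ commutator R.As := by
  rw [← Abelianization.ker_of, ← R.abOfFinsupp_comp_alpha, ← MonoidHom.comap_ker]
  exact MonoidHom.ker_le_comap _ _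

end RackStr

/-- For any rack `X`, the kernel of
`α × ψ : As(X) → ℤ^{⊕O_X} × Inn(X)` is contained in the commutator subgroup of
`As(X)`. -/
theorem ker_alphaPsi_le_commutator (X : Type u) (R : RackStr X) :
    R.alphaPsi.ker ≤ commutator R.As := by
  rw [RackStr.alphaPsi, MonoidHom.ker_prod]
  exact inf_le_left.trans R.ker_alpha_le_commutator
end
end

section
/- Let G be a group, φ an automorphism of G, and H the subgroup of G generated by the elements φ(g⁻¹)g for all g ∈ G. Then every f ∈ Inn₀(Q_{G,φ}) acts on Q_{G,φ} as right multiplication by f(1_G), i.e., f(x) = x·f(1_G) for all x ∈ G, and the map f ↦ f(1_G) is a group isomorphism from Inn₀(Q_{G,φ}) onto H. -/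
/-!  Core framework: racks/quandles with right operation, inner automorphism group
(with opposite composition, acting on the right), associated group. -/

universe u v

noncomputable section

/-! Generalized Alexander quandles `Q_{G,φ}`. -/

section GenAlexander

variable {G : Type u} [Group G] (φ : G ≃* G)

/-- The generalized Alexander quandle `Q_{G,φ}`: the set `G` with
`x * y = φ(xy⁻¹)y`. -/
def genAlexander : QuandleStr G where
  op x y := φ (x * y⁻¹) * y
  bij y := (((Equiv.mulRight y⁻¹).trans φ.toEquiv).trans (Equiv.mulRight y)).bijective
  distrib x y z := by
    show φ (φ (x * y⁻¹) * y * z⁻¹) * z =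
      φ (φ (x * z⁻¹) * z * (φ (y * z⁻¹) * z)⁻¹) * (φ (y * z⁻¹) * z)
    simp only [map_mul, map_inv, mul_inv_rev]
    group
  idem x := by
    show φ (x * x⁻¹) * x = x
    simp

/-- The subgroup `H` of `G` generated by the elements `φ(g⁻¹)g`. -/
def genAlexSubgroup : Subgroup G :=
  Subgroup.closure { h : G | ∃ g : G, h = φ g⁻¹ * g }

end GenAlexander

/-! In `Q_{G,φ}` the right translation by `y` is `x ↦ φ(x) · φ(y⁻¹)y`. Since `H` is `φ`-stable,
the maps `x ↦ φⁿ(x) · c` with `c ∈ H` form a group, so each `g` in the associated group acts as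
`x ↦ φ^{ε(g)}(x) · c_g` with `c_g = 1 · g ∈ H`. On `Ker ε` this is right multiplication by `c_g`,
which makes `f ↦ f(1)` an injective homomorphism on `Inn₀`; its image contains each generator
`φ(y⁻¹)y` of `H`, realised by `e₁⁻¹ e_y` because `s₁` fixes `1`. -/

open scoped Pointwise

section AffineMaps

variable {G : Type*} [Group G] {φ : MulAut G} {H : Subgroup G}

lemma MulAut.zpow_apply_mem_of_mem_stabilizer (hφ : φ ∈ MulAction.stabilizer (MulAut G) H)
    (n : ℤ) {c : G} (hc : c ∈ H) : (φ ^ n) c ∈ H := by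
  have := Subgroup.smul_mem_pointwise_smul c (φ ^ n) H hc
  rwa [MulAction.mem_stabilizer_iff.mp (zpow_mem hφ n)] at this

variable (φ H) in
def affineSubgroup (hφ : φ ∈ MulAction.stabilizer (MulAut G) H) :
    Subgroup (Multiplicative ℤ × (Equiv.Perm G)ᵐᵒᵖ) where
  carrier := {p | p.2.unop 1 ∈ H ∧
    ∀ x, p.2.unop x = (φ ^ Multiplicative.toAdd p.1) x * p.2.unop 1}
  one_mem' := ⟨H.one_mem, fun x => by simp⟩
  mul_mem' := by
    rintro ⟨m, σ⟩ ⟨n, τ⟩ ⟨hσ1, hσ⟩ ⟨hτ1, hτ⟩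
    have hστ : ∀ x, τ.unop (σ.unop x) = (φ ^ n.toAdd) ((φ ^ m.toAdd) x) *
        ((φ ^ n.toAdd) (σ.unop 1) * τ.unop 1) := fun x => by
      rw [hτ, hσ, map_mul, mul_assoc]
    refine ⟨?_, fun x => ?_⟩
    · simp only [Prod.snd_mul, MulOpposite.unop_mul, Equiv.Perm.mul_apply, hστ, map_one,
        one_mul]
      exact H.mul_mem (MulAut.zpow_apply_mem_of_mem_stabilizer hφ _ hσ1) hτ1
    · simp only [Prod.fst_mul, Prod.snd_mul, MulOpposite.unop_mul, Equiv.Perm.mul_apply, hστ,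
        map_one, one_mul, toAdd_mul, add_comm m.toAdd, zpow_add, MulAut.mul_apply]
  inv_mem' := by
    rintro ⟨n, σ⟩ ⟨hσ1, hσ⟩
    have hσinv : ∀ x,
        σ.unop.symm x = (φ ^ (-n.toAdd)) x * (φ ^ (-n.toAdd)) (σ.unop 1)⁻¹ := fun x => by
      rw [Equiv.symm_apply_eq, hσ, ← map_mul, ← MulAut.mul_apply, ← zpow_add,
        add_neg_cancel, zpow_zero, MulAut.one_apply, inv_mul_cancel_right]
    refine ⟨?_, fun x => ?_⟩
    · simp only [Prod.snd_inv, MulOpposite.unop_inv, Equiv.Perm.inv_def, hσinv, map_one,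
        one_mul]
      exact MulAut.zpow_apply_mem_of_mem_stabilizer hφ _ (H.inv_mem hσ1)
    · simp only [Prod.fst_inv, Prod.snd_inv, MulOpposite.unop_inv, Equiv.Perm.inv_def, hσinv,
        map_one, one_mul, toAdd_inv]

end AffineMaps

lemma RackStr.act_e_inv_of_op_eq {X : Type*} (R : RackStr X) {x y : X} (h : R.op x y = x) :
    R.act x (R.e y)⁻¹ = x := by
  conv_lhs => rw [← h, ← R.act_e, ← R.act_mul, mul_inv_cancel, R.act_one]

section GenAlexander

variable {G : Type u} [Group G] (φ : MulAut G)

lemma genAlexander_op_eq (x y : G) : (genAlexander φ).op x y = φ x * (φ y⁻¹ * y) := by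
  rw [← mul_assoc, ← map_mul]
  rfl

lemma genAlexSubgroup_mem_stabilizer :
    φ ∈ MulAction.stabilizer (MulAut G) (genAlexSubgroup φ) := by
  rw [MulAction.mem_stabilizer_iff, genAlexSubgroup, Subgroup.smul_closure]
  congr 1
  ext h
  simp only [Set.mem_smul_set, Set.mem_ofPred_eq, MulAut.smul_def]
  constructor
  · rintro ⟨_, ⟨g, rfl⟩, rfl⟩
    exact ⟨φ g, by rw [map_mul, map_inv, map_inv]⟩
  · rintro ⟨g, rfl⟩
    refine ⟨φ (φ.symm g)⁻¹ * φ.symm g, ⟨φ.symm g, rfl⟩, ?_⟩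
    simp

lemma genAlexander_epsPsi_mem_affineSubgroup (g : (genAlexander φ).As) :
    (genAlexander φ).epsPsi g ∈
      affineSubgroup φ (genAlexSubgroup φ) (genAlexSubgroup_mem_stabilizer φ) := by
  refine PresentedGroup.generated_by _ (Subgroup.comap (genAlexander φ).epsPsi
    (affineSubgroup φ (genAlexSubgroup φ) (genAlexSubgroup_mem_stabilizer φ))) (fun y => ?_) g
  refine ⟨?_, fun x => ?_⟩
  · change (genAlexander φ).op 1 y ∈ _
    rw [genAlexander_op_eq, map_one, one_mul]
    exact Subgroup.subset_closure ⟨y, rfl⟩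
  · change (genAlexander φ).op x y = (φ ^ (1 : ℤ)) x * (genAlexander φ).op 1 y
    rw [genAlexander_op_eq, genAlexander_op_eq, zpow_one, map_one, one_mul]

lemma genAlexander_psi_apply (g : (genAlexander φ).As) (x : G) :
    ((genAlexander φ).psi g).unop x =
      (φ ^ Multiplicative.toAdd ((genAlexander φ).epsAs g)) x *
        ((genAlexander φ).psi g).unop 1 :=
  (genAlexander_epsPsi_mem_affineSubgroup φ g).2 x

lemma genAlexander_inn0_apply {f : (Equiv.Perm G)ᵐᵒᵖ} (hf : f ∈ (genAlexander φ).Inn0)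
    (x : G) : f.unop x = x * f.unop 1 := by
  obtain ⟨g, hg, rfl⟩ := hf
  rw [genAlexander_psi_apply, MonoidHom.mem_ker.mp hg, toAdd_one, zpow_zero, MulAut.one_apply]

lemma genAlexander_inn0_apply_one_mem {f : (Equiv.Perm G)ᵐᵒᵖ}
    (hf : f ∈ (genAlexander φ).Inn0) : f.unop 1 ∈ genAlexSubgroup φ := by
  obtain ⟨g, -, rfl⟩ := hf
  exact (genAlexander_epsPsi_mem_affineSubgroup φ g).1

def genAlexanderInn0EvalOne : (genAlexander φ).Inn0 →* G where
  toFun f := f.1.unop 1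
  map_one' := rfl
  map_mul' _ f' := genAlexander_inn0_apply φ f'.2 _

lemma genAlexanderInn0EvalOne_injective : Function.Injective (genAlexanderInn0EvalOne φ) :=
  fun f f' h => Subtype.ext <| MulOpposite.unop_injective <| Equiv.ext fun x => by
    rw [genAlexander_inn0_apply φ f.2, genAlexander_inn0_apply φ f'.2]
    exact congrArg (x * ·) h

lemma genAlexanderInn0EvalOne_range :
    (genAlexanderInn0EvalOne φ).range = genAlexSubgroup φ := by
  set R := (genAlexander φ).toRackStr
  refine le_antisymm ?_ ((Subgroup.closure_le _).mpr ?_)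
  · rintro _ ⟨f, rfl⟩
    exact genAlexander_inn0_apply_one_mem φ f.2
  · rintro _ ⟨y, rfl⟩
    have hker : (R.e 1)⁻¹ * R.e y ∈ R.epsAs.ker := by
      simp only [MonoidHom.mem_ker, map_mul, map_inv, RackStr.epsAs_e, inv_mul_cancel]
    refine ⟨⟨R.psi ((R.e 1)⁻¹ * R.e y), _, hker, rfl⟩, ?_⟩
    change R.act 1 ((R.e 1)⁻¹ * R.e y) = _
    rw [R.act_mul, R.act_e_inv_of_op_eq ((genAlexander φ).idem 1), R.act_e]
    rw [genAlexander_op_eq, map_one, one_mul]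

end GenAlexander

/-- For a group `G` with automorphism `φ` and
`H = ⟨φ(g⁻¹)g⟩`, every `f ∈ Inn₀(Q_{G,φ})` acts as right multiplication by
`f(1)`, and `f ↦ f(1)` is a group isomorphism `Inn₀(Q_{G,φ}) ≅ H`. -/
theorem genAlexander_inn0_iso (G : Type u) [Group G] (φ : G ≃* G) :
    (∀ f ∈ (genAlexander φ).toRackStr.Inn0, ∀ x : G,
        f.unop x = x * f.unop 1) ∧
    ∃ e : ↥(genAlexander φ).toRackStr.Inn0 ≃* ↥(genAlexSubgroup φ),
      ∀ f : ↥(genAlexander φ).toRackStr.Inn0,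
        (e f : G) = (f : (Equiv.Perm G)ᵐᵒᵖ).unop 1 :=
  ⟨fun _ hf => genAlexander_inn0_apply φ hf,
    ⟨(MonoidHom.ofInjective (genAlexanderInn0EvalOne_injective φ)).trans
      (MulEquiv.subgroupCongr (genAlexanderInn0EvalOne_range φ)), fun _ => rfl⟩⟩
end
end

section
/- Let G be a group and φ an automorphism of G. If the generalized Alexander quandle Q_{G,φ} is connected, then the endomorphism of the abelianization G_ab induced by 1−φ (sending the class of g to the class of gφ(g)⁻¹) is surjective. -/
/-!  Core framework: racks/quandles with right operation, inner automorphism group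
(with opposite composition, acting on the right), associated group. -/

universe u v

noncomputable section

/-! In `G_ab ⧸ range (1 - φ)` the automorphism `φ` acts trivially, so the class of
`φ(xy⁻¹)y` there equals the class of `x`. The class map is therefore constant on the
orbits of `Inn(Q_{G,φ})`; by connectedness it is constant, equal to the class of `1`,
i.e. every element of `G_ab` lies in `range (1 - φ)`. -/

namespace RackStr

variable {X : Type u} (R : RackStr X) {β : Type v}

lemma apply_act_of_apply_op {f : X → β} (hf : ∀ x y, f (R.op x y) = f x) (x : X) (g : R.As) :
    f (R.act x g) = f x := by
  have hg : g ∈ Subgroup.closure (Set.range R.e) := PresentedGroup.closure_range_of R.rels ▸ trivial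
  induction hg using Subgroup.closure_induction generalizing x with
  | mem _ hy => obtain ⟨y, rfl⟩ := hy; rw [act_e, hf]
  | one => rw [act_one]
  | mul g h _ _ hg hh => rw [act_mul, hh, hg]
  | inv g _ hg => rw [← hg (R.act x g⁻¹), ← act_mul, inv_mul_cancel, act_one]

lemma IsConnected.apply_eq {R : RackStr X} (hR : R.IsConnected) {f : X → β}
    (hf : ∀ x y, f (R.op x y) = f x) (x y : X) : f x = f y := by
  obtain ⟨g, rfl⟩ := hR x y
  exact (R.apply_act_of_apply_op hf x g).symm

end RackStr

lemma QuotientGroup.mk_apply_eq_mk_range_id_mul_inv {A : Type u} [CommGroup A] (ψ : A →* A)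
    (a : A) : ((ψ a : A) : A ⧸ (MonoidHom.id A * ψ⁻¹).range) = a := by
  rw [QuotientGroup.eq]
  exact ⟨a, by simp [mul_comm]⟩

lemma genAlexander_op {G : Type u} [Group G] (φ : G ≃* G) (x y : G) :
    (genAlexander φ).op x y = φ (x * y⁻¹) * y := rfl

/-- If the generalized Alexander quandle `Q_{G,φ}` is
connected, then the endomorphism of `G_ab` induced by `1-φ` (sending the class
of `g` to the class of `g·φ(g)⁻¹`) is surjective. -/
theorem genAlexander_oneSubPhi_surjective (G : Type u) [Group G] (φ : G ≃* G)
    (hconn : (genAlexander φ).toRackStr.IsConnected) :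
    Function.Surjective
      ((MonoidHom.id (Abelianization G)) * (Abelianization.map φ.toMonoidHom)⁻¹) := by
  set ψ := Abelianization.map φ.toMonoidHom
  let π : G →* Abelianization G ⧸ (MonoidHom.id _ * ψ⁻¹).range :=
    (QuotientGroup.mk' _).comp Abelianization.of
  have hπ_φ (g : G) : π (φ g) = π g :=
    QuotientGroup.mk_apply_eq_mk_range_id_mul_inv ψ (Abelianization.of g)
  have hπ_op (x y : G) : π ((genAlexander φ).op x y) = π x := by
    rw [genAlexander_op, map_mul, hπ_φ, ← map_mul, inv_mul_cancel_right]
  intro a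
  induction a using QuotientGroup.induction_on with | H g =>
  change Abelianization.of g ∈ (MonoidHom.id _ * ψ⁻¹).range
  rw [← QuotientGroup.eq_one_iff]
  exact (hconn.apply_eq hπ_op g 1).trans (map_one π)
end
end

section
/- Let X be a connected quandle, x₀ ∈ X, and let σ be the automorphism of the abelianization Inn₀(X)_ab induced by the conjugation f ↦ s_{x₀}⁻¹ f s_{x₀} of Inn₀(X). Then the endomorphism 1−σ of Inn₀(X)_ab is surjective. -/
/-!  Core framework: racks/quandles with right operation, inner automorphism group
(with opposite composition, acting on the right), associated group. -/

universe u v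

noncomputable section

/-! Products of quandles, and the conjugation automorphism `σ` of `Inn₀`. -/

section ProdQuandle

variable {X : Type u} {Y : Type v}

/-- The product quandle: the quandle operation is defined componentwise. -/
def prodQuandle (Q : QuandleStr X) (Q' : QuandleStr Y) : QuandleStr (X × Y) where
  op p q := (Q.op p.1 q.1, Q'.op p.2 q.2)
  bij q := ((Q.toRackStr.s q.1).prodCongr (Q'.toRackStr.s q.2)).bijective
  distrib p q r := Prod.ext (Q.distrib p.1 q.1 r.1) (Q'.distrib p.2 q.2 r.2)
  idem p := Prod.ext (Q.idem p.1) (Q'.idem p.2)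

end ProdQuandle

namespace RackStr

variable {X : Type u} (R : RackStr X)

lemma conj_mem_Inn0 (x₀ : X) {f : (Equiv.Perm X)ᵐᵒᵖ} (hf : f ∈ R.Inn0) :
    (R.sop x₀)⁻¹ * f * R.sop x₀ ∈ R.Inn0 := by
  obtain ⟨g, hg, rfl⟩ := hf
  refine ⟨(R.e x₀)⁻¹ * g * R.e x₀, ?_, by rw [map_mul, map_mul, map_inv, psi_e]⟩
  have hg' : R.epsAs g = 1 := hg
  show R.epsAs ((R.e x₀)⁻¹ * g * R.e x₀) = 1
  rw [map_mul, map_mul, map_inv, hg', mul_one, inv_mul_cancel]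

lemma conj_mem_Inn0' (x₀ : X) {f : (Equiv.Perm X)ᵐᵒᵖ} (hf : f ∈ R.Inn0) :
    R.sop x₀ * f * (R.sop x₀)⁻¹ ∈ R.Inn0 := by
  obtain ⟨g, hg, rfl⟩ := hf
  refine ⟨R.e x₀ * g * (R.e x₀)⁻¹, ?_, by rw [map_mul, map_mul, map_inv, psi_e]⟩
  have hg' : R.epsAs g = 1 := hg
  show R.epsAs (R.e x₀ * g * (R.e x₀)⁻¹) = 1
  rw [map_mul, map_mul, map_inv, hg', mul_one, mul_inv_cancel]

/-- The automorphism `σ : f ↦ s_{x₀}⁻¹ f s_{x₀}` of `Inn₀(X)`. -/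
def sigmaInn0 (x₀ : X) : ↥R.Inn0 ≃* ↥R.Inn0 where
  toFun f := ⟨(R.sop x₀)⁻¹ * f * R.sop x₀, R.conj_mem_Inn0 x₀ f.2⟩
  invFun f := ⟨R.sop x₀ * f * (R.sop x₀)⁻¹, R.conj_mem_Inn0' x₀ f.2⟩
  left_inv f := by
    apply Subtype.ext
    simp [mul_assoc]
  right_inv f := by
    apply Subtype.ext
    simp [mul_assoc]
  map_mul' f g := by
    apply Subtype.ext
    simp [mul_assoc]

/-- The automorphism induced by `σ` on the abelianization `Inn₀(X)_ab`. -/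
def sigmaAb (x₀ : X) : Abelianization ↥R.Inn0 →* Abelianization ↥R.Inn0 :=
  Abelianization.map (R.sigmaInn0 x₀).toMonoidHom

/-- `σ` on `Inn₀(X)_ab`, as a `ℤ`-linear map (additively). -/
def sigmaAbLin (x₀ : X) :
    Additive (Abelianization ↥R.Inn0) →ₗ[ℤ] Additive (Abelianization ↥R.Inn0) :=
  (MonoidHom.toAdditive (R.sigmaAb x₀)).toIntLinearMap

end RackStr

/-!
Write `s₀ = s_{x₀}` and let `χ : Ker ε → C` send `g` to the class of `ψ(g)` in the cokernel `C` of
`1 - σ`. Since `σ` acts trivially on `C`, `χ` is invariant under conjugation by `e_{x₀}`, and an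
invariant homomorphism on `Ker ε` extends to `θ : As(X) → C`, `θ(g) = χ(g e_{x₀}^{-ε(g)})`.
In a connected quandle `s_x = h⁻¹ s₀ h` for some `h ∈ Inn₀(X)`, so
`θ(e_x) = χ(e_x e_{x₀}⁻¹) = [h⁻¹ σ⁻¹(h)] = 1`. Hence `θ`, and with it `χ`, is trivial: `C = 0`.
-/
theorem MulAut.comp_zpow_eq_of_comp_eq {H β : Type*} [Group H] {α : MulAut H} {f : H → β}
    (hf : f ∘ α = f) (n : ℤ) : f ∘ ⇑(α ^ n) = f := by
  induction n using Int.induction_on with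
  | zero => rfl
  | succ n ih => rw [zpow_add_one, MulAut.coe_mul, ← Function.comp_assoc, ih, hf]
  | pred n ih =>
    rw [zpow_sub_one, MulAut.coe_mul, ← Function.comp_assoc, ih, MulAut.coe_inv]
    calc f ∘ ⇑α.symm = (f ∘ α) ∘ ⇑α.symm := by rw [hf]
      _ = f := by ext; simp

namespace MonoidHom

variable {G C : Type*} [Group G] [CommGroup C] {ε : G →* Multiplicative ℤ} {t : G}

/-- The `Ker ε`-component of `g` in the decomposition `G = Ker ε ⋊ ⟨t⟩`. -/
def kerPart (ht : ε t = .ofAdd 1) (g : G) : ε.ker :=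
  ⟨g * t ^ (-(ε g).toAdd), by simp [ht, ← ofAdd_zsmul]⟩

@[simp] lemma coe_kerPart (ht : ε t = .ofAdd 1) (g : G) :
    (kerPart ht g : G) = g * t ^ (-(ε g).toAdd) := rfl

lemma kerPart_mul (ht : ε t = .ofAdd 1) (g h : G) :
    kerPart ht (g * h) = kerPart ht g * MulAut.conjNormal (t ^ (ε g).toAdd) (kerPart ht h) := by
  ext
  simp only [coe_kerPart, map_mul, toAdd_mul, Subgroup.coe_mul, MulAut.conjNormal_apply]
  group

lemma kerPart_coe (ht : ε t = .ofAdd 1) (k : ε.ker) : kerPart ht k = k := by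
  ext
  simp [MonoidHom.mem_ker.mp k.2]

lemma kerPart_self (ht : ε t = .ofAdd 1) : kerPart ht t = 1 := by
  ext
  simp [ht]

lemma exists_extension_of_conjNormal_invariant (ht : ε t = .ofAdd 1) (χ : ε.ker →* C)
    (hχ : ∀ k, χ (MulAut.conjNormal t k) = χ k) :
    ∃ θ : G →* C, θ t = 1 ∧ ∀ k : ε.ker, θ k = χ k := by
  have hχn (n : ℤ) (k : ε.ker) : χ (MulAut.conjNormal (t ^ n) k) = χ k := by
    rw [map_zpow]
    exact congrFun (MulAut.comp_zpow_eq_of_comp_eq (funext hχ) n) k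
  refine ⟨⟨⟨fun g ↦ χ (kerPart ht g), ?_⟩, fun g h ↦ ?_⟩, ?_, ?_⟩
  · simpa using congrArg χ (kerPart_coe ht 1)
  · simp only [kerPart_mul, map_mul, hχn]
  · simp [kerPart_self]
  · exact fun k ↦ congrArg χ (kerPart_coe ht k)

end MonoidHom

theorem QuotientGroup.mk'_range_id_mul_inv_apply {A : Type*} [CommGroup A] (σ : A →* A) (a : A) :
    mk' (MonoidHom.id A * σ⁻¹).range (σ a) = mk' (MonoidHom.id A * σ⁻¹).range a :=
  (eq_iff_div_mem).2 ⟨a⁻¹, by simp [div_eq_mul_inv, mul_comm]⟩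

namespace RackStr

variable {X : Type u} (R : RackStr X)

lemma sop_act (g : R.As) : ∀ y, R.sop (R.act y g) = (R.psi g)⁻¹ * R.sop y * R.psi g := by
  have hg : g ∈ Subgroup.closure (Set.range R.e) :=
    (PresentedGroup.closure_range_of R.rels).ge (Subgroup.mem_top g)
  induction hg using Subgroup.closure_induction with
  | mem _ hx =>
    obtain ⟨x, rfl⟩ := hx
    intro y
    rw [act_e, psi_e, mul_assoc, sop_rel, ← mul_assoc, inv_mul_cancel, one_mul]
  | one => simp
  | mul g h _ _ ihg ihh =>
    intro y
    rw [act_mul, ihh, ihg, map_mul]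
    group
  | inv g _ ih =>
    intro y
    have h := ih (R.act y g⁻¹)
    rw [← act_mul, inv_mul_cancel, act_one] at h
    rw [h, map_inv]
    group

lemma act_e_zpow_self {x : X} (hx : R.op x x = x) (n : ℤ) : R.act x (R.e x ^ n) = x :=
  R.mem_stabAs.mp <| Subgroup.zpow_mem _ (R.mem_stabAs.mpr <| by rw [act_e, hx]) n

lemma exists_mem_ker_sop_eq_conj (hconn : R.IsConnected) {x₀ : X} (hx₀ : R.op x₀ x₀ = x₀)
    (x : X) : ∃ g ∈ R.epsAs.ker, R.sop x = (R.psi g)⁻¹ * R.sop x₀ * R.psi g := by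
  obtain ⟨g, hg⟩ := hconn x₀ x
  refine ⟨R.e x₀ ^ (-(R.epsAs g).toAdd) * g, ?_, ?_⟩
  · simp [← ofAdd_zsmul]
  · rw [← sop_act, act_mul, act_e_zpow_self _ hx₀, hg]

def psiInn0 : R.epsAs.ker →* R.Inn0 := R.psi.subgroupMap R.epsAs.ker

@[simp] lemma coe_psiInn0 (k : R.epsAs.ker) : (R.psiInn0 k : (Equiv.Perm X)ᵐᵒᵖ) = R.psi k := rfl

lemma psiInn0_conjNormal (x₀ : X) (k : R.epsAs.ker) :
    R.psiInn0 (MulAut.conjNormal (R.e x₀) k) = (R.sigmaInn0 x₀).symm (R.psiInn0 k) := by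
  ext
  simp [sigmaInn0, MulAut.conjNormal_apply]

def cokerMk (x₀ : X) :
    Abelianization R.Inn0 →* Abelianization R.Inn0 ⧸ (MonoidHom.id _ * (R.sigmaAb x₀)⁻¹).range :=
  QuotientGroup.mk' _

lemma cokerMk_of_sigmaInn0_symm (x₀ : X) (f : R.Inn0) :
    R.cokerMk x₀ (Abelianization.of ((R.sigmaInn0 x₀).symm f)) =
      R.cokerMk x₀ (Abelianization.of f) := by
  rw [cokerMk, ← QuotientGroup.mk'_range_id_mul_inv_apply (R.sigmaAb x₀)]
  simp [sigmaAb]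

def cokerChar (x₀ : X) :
    R.epsAs.ker →* Abelianization R.Inn0 ⧸ (MonoidHom.id _ * (R.sigmaAb x₀)⁻¹).range :=
  (R.cokerMk x₀).comp (Abelianization.of.comp R.psiInn0)

lemma cokerChar_conjNormal (x₀ : X) (k : R.epsAs.ker) :
    R.cokerChar x₀ (MulAut.conjNormal (R.e x₀) k) = R.cokerChar x₀ k := by
  simp only [cokerChar, MonoidHom.comp_apply, psiInn0_conjNormal, cokerMk_of_sigmaInn0_symm]

lemma cokerChar_e_mul_inv (hconn : R.IsConnected) {x₀ : X} (hx₀ : R.op x₀ x₀ = x₀) (x : X) :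
    R.cokerChar x₀ ⟨R.e x * (R.e x₀)⁻¹, by simp⟩ = 1 := by
  obtain ⟨g, hg, hx⟩ := R.exists_mem_ker_sop_eq_conj hconn hx₀ x
  have hψ : R.psiInn0 ⟨R.e x * (R.e x₀)⁻¹, by simp⟩ =
      (R.psiInn0 ⟨g, hg⟩)⁻¹ * (R.sigmaInn0 x₀).symm (R.psiInn0 ⟨g, hg⟩) := by
    ext
    simp [hx, sigmaInn0, mul_assoc]
  simp only [cokerChar, MonoidHom.comp_apply, hψ, map_mul, map_inv, cokerMk_of_sigmaInn0_symm,
    inv_mul_cancel]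

end RackStr

/-- For a connected quandle `X` and `x₀ ∈ X`, the
endomorphism `1-σ` of `Inn₀(X)_ab` (where `σ` is induced by the conjugation
`f ↦ s_{x₀}⁻¹ f s_{x₀}`) is surjective. -/
theorem oneSubSigma_surjective (X : Type u) (Q : QuandleStr X)
    (hconn : Q.toRackStr.IsConnected) (x₀ : X) :
    Function.Surjective
      ((MonoidHom.id (Abelianization ↥Q.toRackStr.Inn0)) *
        (Q.toRackStr.sigmaAb x₀)⁻¹) := by
  let R := Q.toRackStr
  obtain ⟨θ, hθx₀, hθχ⟩ := MonoidHom.exists_extension_of_conjNormal_invariant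
    (R.epsAs_e x₀) (R.cokerChar x₀) (R.cokerChar_conjNormal x₀)
  have hθ : θ = 1 := PresentedGroup.ext fun x ↦
    calc θ (R.e x) = θ (R.e x * (R.e x₀)⁻¹) := by simp [hθx₀]
      _ = 1 := by rw [hθχ ⟨_, by simp⟩, R.cokerChar_e_mul_inv hconn (Q.idem x₀)]
  rw [← MonoidHom.range_eq_top, Subgroup.eq_top_iff']
  intro a
  induction a using QuotientGroup.induction_on with | H f => ?_
  obtain ⟨k, rfl⟩ := R.psi.subgroupMap_surjective R.epsAs.ker f
  exact (QuotientGroup.eq_one_iff _).mp ((hθχ k).symm.trans (DFunLike.congr_fun hθ (k : R.As)))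
end
end
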